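/- Let F be the free group on three generators a, b, c, let N1 be the normal closure of {a} and N2 the normal closure of {b}, and let u = c²ba and v = cbca. Then u and v are conjugate in F/N1 and conjugate in F/N2, but u and v are not conjugate in F/(N1 ∩ N2). -/

import Mathlib

/-!
Modulo `a`, `u = c²b` and `v = cbc` are conjugate by `c`; modulo `b`, `u = v = c²a`.

For the negative part, map `F` onto `S₃` in two ways: `killA` sends `a, b, c` to `1, σ, τ` and
`killB` sends them to `σ, 1, τ`, where `σ` is a 3-cycle and `τ` a transposition. A conjugacy
modulo `N1 ⊓ N2` yields one `w ∈ F` conjugating `u` to `v` modulo `N1` and modulo `N2`, hence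
modulo both kernels. Since the centralizer of `σ` in `S₃` is `A₃`, and under `killA` the pair
`(u, v)` becomes `(σ, τστ) = (σ, σ⁻¹)`, `killA w` is odd; under `killB` it becomes `(σ, σ)`, so
`killB w` is even. But both maps send `a, b` to even and `c` to odd permutations, so `killA w`
and `killB w` have the same sign.
-/

open QuotientGroup Equiv

section Quotient

variable {G : Type*} [Group G]

theorem QuotientGroup.mk_eq_one_of_normalClosure_singleton (x : G) :
    (x : G ⧸ Subgroup.normalClosure {x}) = 1 :=
  (eq_one_iff x).mpr (Subgroup.subset_normalClosure rfl)

theorem MonoidHom.normalClosure_singleton_le_ker {H : Type*} [Group H] {φ : G →* H} {x : G}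
    (hx : φ x = 1) : Subgroup.normalClosure {x} ≤ φ.ker :=
  Subgroup.normalClosure_le_normal (Set.singleton_subset_iff.mpr hx)

theorem exists_map_conj_eq_of_isConj_mk {H : Type*} [Group H] {N : Subgroup G} [N.Normal]
    {φ : G →* H} (hN : N ≤ φ.ker) {u v : G} (h : IsConj (u : G ⧸ N) (v : G ⧸ N)) :
    ∃ w, φ w * φ u * (φ w)⁻¹ = φ v := by
  obtain ⟨q, hq⟩ := isConj_iff.mp h
  obtain ⟨w, rfl⟩ := mk_surjective q
  refine ⟨w, ?_⟩
  simpa using congrArg (lift N φ hN) hq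

theorem exists_map_conj_eq_of_isConj_mk_inf {H₁ H₂ : Type*} [Group H₁] [Group H₂]
    {N₁ N₂ : Subgroup G} [N₁.Normal] [N₂.Normal] {φ₁ : G →* H₁} {φ₂ : G →* H₂}
    (h₁ : N₁ ≤ φ₁.ker) (h₂ : N₂ ≤ φ₂.ker) {u v : G}
    (h : IsConj (u : G ⧸ N₁ ⊓ N₂) (v : G ⧸ N₁ ⊓ N₂)) :
    ∃ w, φ₁ w * φ₁ u * (φ₁ w)⁻¹ = φ₁ v ∧ φ₂ w * φ₂ u * (φ₂ w)⁻¹ = φ₂ v := by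
  obtain ⟨w, hw⟩ := exists_map_conj_eq_of_isConj_mk
    (φ := φ₁.prod φ₂) ((MonoidHom.ker_prod φ₁ φ₂).symm ▸ inf_le_inf h₁ h₂) h
  exact ⟨w, congrArg Prod.fst hw, congrArg Prod.snd hw⟩

end Quotient

namespace FreeGroupFinThree

abbrev σ : Perm (Fin 3) := finRotate 3

abbrev τ : Perm (Fin 3) := swap 0 1

def killA : FreeGroup (Fin 3) →* Perm (Fin 3) := FreeGroup.lift ![1, σ, τ]

def killB : FreeGroup (Fin 3) →* Perm (Fin 3) := FreeGroup.lift ![σ, 1, τ]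

theorem sign_eq_neg_one_of_conj_eq_swap_conj :
    ∀ g : Perm (Fin 3), g * σ * g⁻¹ = τ * σ * τ → Perm.sign g = -1 := by
  decide

theorem sign_eq_one_of_conj_eq_self :
    ∀ g : Perm (Fin 3), g * σ * g⁻¹ = σ → Perm.sign g = 1 := by
  decide

theorem sign_comp_killA_eq_sign_comp_killB : Perm.sign.comp killA = Perm.sign.comp killB := by
  refine FreeGroup.ext_hom _ _ fun i => ?_
  fin_cases i <;> simp [killA, killB]

end FreeGroupFinThree

open FreeGroupFinThree in
theorem stmt_4 :
    let F := FreeGroup (Fin 3)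
    let a : F := FreeGroup.of 0
    let b : F := FreeGroup.of 1
    let c : F := FreeGroup.of 2
    let N1 := Subgroup.normalClosure {a}
    let N2 := Subgroup.normalClosure {b}
    let u : F := c * c * b * a
    let v : F := c * b * c * a
    IsConj (QuotientGroup.mk u : F ⧸ N1) (QuotientGroup.mk v) ∧
    IsConj (QuotientGroup.mk u : F ⧸ N2) (QuotientGroup.mk v) ∧
    ¬ IsConj (QuotientGroup.mk u : F ⧸ (N1 ⊓ N2)) (QuotientGroup.mk v) := by
  intro F a b c N1 N2 u v
  refine ⟨?_, ?_, fun h => ?_⟩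
  · have ha : (a : F ⧸ N1) = 1 := mk_eq_one_of_normalClosure_singleton a
    refine isConj_iff.mpr ⟨(c : F ⧸ N1)⁻¹, ?_⟩
    simp only [u, v, mk_mul, ha, mul_one]
    group
  · have hb : (b : F ⧸ N2) = 1 := mk_eq_one_of_normalClosure_singleton b
    simp only [u, v, mk_mul, hb, mul_one]
    exact IsConj.refl _
  · obtain ⟨w, hA, hB⟩ := exists_map_conj_eq_of_isConj_mk_inf
      (MonoidHom.normalClosure_singleton_le_ker (φ := killA) (x := a) rfl)
      (MonoidHom.normalClosure_singleton_le_ker (φ := killB) (x := b) rfl) h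
    have hA' : killA w * σ * (killA w)⁻¹ = τ * σ * τ := by simpa [killA, u, v, a, b, c] using hA
    have hB' : killB w * σ * (killB w)⁻¹ = σ := by simpa [killB, u, v, a, b, c] using hB
    have hsign := DFunLike.congr_fun sign_comp_killA_eq_sign_comp_killB w
    simp only [MonoidHom.comp_apply, sign_eq_neg_one_of_conj_eq_swap_conj _ hA',
      sign_eq_one_of_conj_eq_self _ hB'] at hsign
    exact absurd hsign (by decide)
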